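/- Let α ∈ (0,1). There exists a constant c* > 0 such that for every Δt > 0 and all integers 1 ≤ k ≤ n, Δt · Σ_{l=k}^{n} ((n − l + 1)Δt)^{−1+α} · ((l − k + 1)Δt)^{−α} ≥ c*. Consequently, the constants c_{n,k} := (Δt · Σ_{l=k}^{n} t_{n−l+1}^{−1+α} t_{l−k+1}^{−α})^{−1}, with t_j = jΔt, satisfy c_{n,k} ≤ C for all 1 ≤ k ≤ n with C = 1/c* independent of n, k and Δt. -/
import Mathlib


theorem discrete_factorization_constants_bounded (α : ℝ) (hα : α ∈ Set.Ioo (0 : ℝ) 1) :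
    ∃ cstar : ℝ, 0 < cstar ∧
      ∀ (Δt : ℝ), 0 < Δt → ∀ n k : ℕ, 1 ≤ k → k ≤ n →
        cstar ≤ Δt * ∑ l ∈ Finset.Icc k n,
            (((n - l + 1 : ℕ) : ℝ) * Δt) ^ (-1 + α) * (((l - k + 1 : ℕ) : ℝ) * Δt) ^ (-α) ∧
        (Δt * ∑ l ∈ Finset.Icc k n,
            (((n - l + 1 : ℕ) : ℝ) * Δt) ^ (-1 + α) * (((l - k + 1 : ℕ) : ℝ) * Δt) ^ (-α))⁻¹
          ≤ 1 / cstar := by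
  obtain ⟨hα0, hα1⟩ := hα
  refine ⟨1, one_pos, fun Δt hΔt n k hk hkn => ?_⟩
  set m : ℕ := n - k + 1 with hm
  have hmpos : (0 : ℝ) < (m : ℝ) := by positivity
  have hMpos : (0 : ℝ) < (m : ℝ) * Δt := by positivity
  have key : (1 : ℝ) ≤ Δt * ∑ l ∈ Finset.Icc k n,
      (((n - l + 1 : ℕ) : ℝ) * Δt) ^ (-1 + α) * (((l - k + 1 : ℕ) : ℝ) * Δt) ^ (-α) := by
    have hterm : ∀ l ∈ Finset.Icc k n,
        ((m : ℝ) * Δt) ^ (-1 + α) * ((m : ℝ) * Δt) ^ (-α)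
          ≤ (((n - l + 1 : ℕ) : ℝ) * Δt) ^ (-1 + α) * (((l - k + 1 : ℕ) : ℝ) * Δt) ^ (-α) := by
      intro l hl
      rw [Finset.mem_Icc] at hl
      obtain ⟨hkl, hln⟩ := hl
      have h1 : (0 : ℝ) < ((n - l + 1 : ℕ) : ℝ) * Δt := by positivity
      have h2 : (0 : ℝ) < ((l - k + 1 : ℕ) : ℝ) * Δt := by positivity
      have hb1 : ((n - l + 1 : ℕ) : ℝ) * Δt ≤ (m : ℝ) * Δt := by
        have : n - l + 1 ≤ m := by omega
        have := (Nat.cast_le (α := ℝ)).2 this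
        nlinarith
      have hb2 : ((l - k + 1 : ℕ) : ℝ) * Δt ≤ (m : ℝ) * Δt := by
        have : l - k + 1 ≤ m := by omega
        have := (Nat.cast_le (α := ℝ)).2 this
        nlinarith
      exact mul_le_mul (Real.rpow_le_rpow_of_nonpos h1 hb1 (by linarith))
        (Real.rpow_le_rpow_of_nonpos h2 hb2 (by linarith))
        (Real.rpow_nonneg hMpos.le _) (Real.rpow_nonneg h1.le _)
    have hcard : (Finset.Icc k n).card = m := by
      rw [Nat.card_Icc]; omega
    have hsum := Finset.card_nsmul_le_sum (Finset.Icc k n)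
      (fun l => (((n - l + 1 : ℕ) : ℝ) * Δt) ^ (-1 + α) * (((l - k + 1 : ℕ) : ℝ) * Δt) ^ (-α))
      (((m : ℝ) * Δt) ^ (-1 + α) * ((m : ℝ) * Δt) ^ (-α)) hterm
    rw [hcard, nsmul_eq_mul] at hsum
    have hprod : ((m : ℝ) * Δt) ^ (-1 + α) * ((m : ℝ) * Δt) ^ (-α)
        = ((m : ℝ) * Δt)⁻¹ := by
      rw [← Real.rpow_add hMpos]
      have hE : (-1 + α) + -α = (-1 : ℝ) := by ring
      rw [hE, Real.rpow_neg_one]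
    rw [hprod] at hsum
    have heq : Δt * ((m : ℝ) * ((m : ℝ) * Δt)⁻¹) = 1 := by
      field_simp
    calc (1 : ℝ) = Δt * ((m : ℝ) * ((m : ℝ) * Δt)⁻¹) := heq.symm
      _ ≤ _ := by
        have := mul_le_mul_of_nonneg_left hsum hΔt.le
        linarith
  refine ⟨key, ?_⟩
  rw [one_div_one]
  exact inv_le_one_of_one_le₀ key
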